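/- L^p continuity of the analysis covariance map with a random argument: let Q be a random positive semidefinite operator, P ≥ 0 constant, R > 0, and c = |H|²|R^{-1}|. Then for 1 ≤ p < ∞, ‖A(Q) − A(P)‖_p ≤ (1 + c|P|)‖Q−P‖_p + (c + c²|P|)‖Q‖_{2p}‖Q−P‖_{2p}, where A(Q) = Q − Q H*(H Q H* + R)^{-1} H Q. -/

import Mathlib

/-!
Writing `S(Q) = H Q H* + R`, the resolvent identity `S(Q)⁻¹ − S(P)⁻¹ = S(Q)⁻¹ H (P − Q) H* S(P)⁻¹`
splits `A(Q) − A(P)` into `Q − P` and three terms, each a product of operators containing one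
factor `Q − P`. Since `S(Q) ≥ R > 0`, every inverse `S(·)⁻¹` has norm at most `‖R⁻¹‖`, which gives
the pointwise bound `‖A(Q) − A(P)‖ ≤ (1 + c‖P‖)‖Q − P‖ + (c + c²‖P‖)‖Q‖‖Q − P‖`. Minkowski's
inequality in `Lᵖ` and Hölder's inequality `‖ |Q| |Q − P| ‖_p ≤ ‖Q‖_{2p} ‖Q − P‖_{2p}` finish.
-/

open MeasureTheory ContinuousLinearMap RealInnerProductSpace

variable {V W : Type*} [NormedAddCommGroup V] [InnerProductSpace ℝ V] [CompleteSpace V]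
  [NormedAddCommGroup W] [InnerProductSpace ℝ W] [CompleteSpace W]

/-- The analysis covariance map `A(Q) = Q − Q H* (H Q H* + R)⁻¹ H Q`. -/
noncomputable def analysisCov (H : V →L[ℝ] W) (R : W →L[ℝ] W) (Q : V →L[ℝ] V) : V →L[ℝ] V :=
  Q - (Q ∘L ContinuousLinearMap.adjoint H) ∘L
    Ring.inverse (H ∘L Q ∘L ContinuousLinearMap.adjoint H + R) ∘L (H ∘L Q)

open scoped ENNReal

instance ENNReal.HolderTriple.two_mul (p : ℝ≥0∞) : ENNReal.HolderTriple (2 * p) (2 * p) p where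
  inv_add_inv_eq_inv := by
    rw [ENNReal.mul_inv (by simp) (by simp), ← add_mul, ENNReal.inv_two_add_inv_two, one_mul]

namespace MeasureTheory

variable {Ω : Type*} [MeasurableSpace Ω] {μ : Measure Ω}

theorem integral_le_toReal_lintegral_ofReal {f : Ω → ℝ} (hf : 0 ≤ᵐ[μ] f) :
    ∫ ω, f ω ∂μ ≤ (∫⁻ ω, ENNReal.ofReal (f ω) ∂μ).toReal := by
  by_cases hfm : AEStronglyMeasurable f μ
  · exact (integral_eq_lintegral_of_nonneg_ae hf hfm).le
  · rw [integral_non_aestronglyMeasurable hfm]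
    positivity

variable {E F G : Type*} [NormedAddCommGroup E] [NormedAddCommGroup F] [NormedAddCommGroup G]

/-- Holds for every `f`, measurable or not (a non-measurable integrand has Bochner integral `0`),
so `ω ↦ A(Q ω)` never has to be shown measurable. -/
theorem integral_norm_rpow_rpow_le_toReal_eLpNorm (f : Ω → E) {p : ℝ} (hp : 0 < p) :
    (∫ ω, ‖f ω‖ ^ p ∂μ) ^ (1 / p) ≤ (eLpNorm f (ENNReal.ofReal p) μ).toReal := by
  rw [eLpNorm_eq_lintegral_rpow_enorm_toReal (by simpa using hp) ENNReal.ofReal_ne_top,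
    ENNReal.toReal_ofReal hp.le, ← ENNReal.toReal_rpow]
  gcongr
  calc ∫ ω, ‖f ω‖ ^ p ∂μ ≤ (∫⁻ ω, ENNReal.ofReal (‖f ω‖ ^ p) ∂μ).toReal :=
        integral_le_toReal_lintegral_ofReal (ae_of_all _ fun ω => by positivity)
    _ = (∫⁻ ω, ‖f ω‖ₑ ^ p ∂μ).toReal := by
        simp_rw [← ENNReal.ofReal_rpow_of_nonneg (norm_nonneg _) hp.le, ofReal_norm]

theorem MemLp.toReal_eLpNorm_eq_integral_norm_rpow_rpow {f : Ω → E} {p : ℝ} (hp : 0 < p)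
    (hf : MemLp f (ENNReal.ofReal p) μ) :
    (eLpNorm f (ENNReal.ofReal p) μ).toReal = (∫ ω, ‖f ω‖ ^ p ∂μ) ^ (1 / p) := by
  rw [hf.eLpNorm_eq_integral_rpow_norm (by simpa using hp) ENNReal.ofReal_ne_top,
    ENNReal.toReal_ofReal hp.le, one_div, ENNReal.toReal_ofReal]
  exact Real.rpow_nonneg (integral_nonneg fun ω => by positivity) _

theorem eLpNorm_le_of_norm_le_mul_add_mul_norm_mul {f : Ω → E} {g : Ω → F} {h : Ω → G}
    {p q r : ℝ≥0∞} [ENNReal.HolderTriple q r p] (hp : 1 ≤ p) (hg : AEStronglyMeasurable g μ)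
    (hh : AEStronglyMeasurable h μ) (a b : ℝ)
    (hf : ∀ᵐ ω ∂μ, ‖f ω‖ ≤ a * ‖g ω‖ + b * (‖h ω‖ * ‖g ω‖)) :
    eLpNorm f p μ ≤ ‖a‖ₑ * eLpNorm g p μ + ‖b‖ₑ * (eLpNorm h q μ * eLpNorm g r μ) := by
  have hhg : AEStronglyMeasurable (fun ω => ‖h ω‖ * ‖g ω‖) μ := hh.norm.mul hg.norm
  calc eLpNorm f p μ
      ≤ eLpNorm (a • (fun ω => ‖g ω‖) + b • (fun ω => ‖h ω‖ * ‖g ω‖)) p μ :=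
        eLpNorm_mono_ae_real hf
    _ ≤ ‖a‖ₑ * eLpNorm g p μ + ‖b‖ₑ * eLpNorm (fun ω => ‖h ω‖ * ‖g ω‖) p μ := by
        refine (eLpNorm_add_le (hg.norm.const_smul a) (hhg.const_smul b) hp).trans_eq ?_
        rw [eLpNorm_const_smul, eLpNorm_const_smul, eLpNorm_norm]
    _ ≤ ‖a‖ₑ * eLpNorm g p μ + ‖b‖ₑ * (eLpNorm h q μ * eLpNorm g r μ) := by
        gcongr
        simpa using eLpNorm_le_eLpNorm_mul_eLpNorm'_of_norm hh hg (fun x y => ‖x‖ * ‖y‖) 1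
          (ae_of_all _ fun ω => by simp)

theorem integral_norm_rpow_rpow_le_of_norm_le_mul_add_mul_norm_mul [IsFiniteMeasure μ]
    {f : Ω → E} {g : Ω → F} {h : Ω → G} {p : ℝ} (hp : 1 ≤ p)
    (hg : MemLp g (ENNReal.ofReal (2 * p)) μ) (hh : MemLp h (ENNReal.ofReal (2 * p)) μ)
    {a b : ℝ} (ha : 0 ≤ a) (hb : 0 ≤ b)
    (hf : ∀ᵐ ω ∂μ, ‖f ω‖ ≤ a * ‖g ω‖ + b * (‖h ω‖ * ‖g ω‖)) :
    (∫ ω, ‖f ω‖ ^ p ∂μ) ^ (1 / p)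
      ≤ a * (∫ ω, ‖g ω‖ ^ p ∂μ) ^ (1 / p)
        + b * (∫ ω, ‖h ω‖ ^ (2 * p) ∂μ) ^ (1 / (2 * p))
          * (∫ ω, ‖g ω‖ ^ (2 * p) ∂μ) ^ (1 / (2 * p)) := by
  have hp0 : 0 < p := by linarith
  have : ENNReal.HolderTriple (.ofReal (2 * p)) (.ofReal (2 * p)) (.ofReal p) := by
    rw [ENNReal.ofReal_mul zero_le_two, ENNReal.ofReal_ofNat]
    infer_instance
  have hgp : MemLp g (ENNReal.ofReal p) μ :=
    hg.mono_exponent (ENNReal.ofReal_le_ofReal (by linarith))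
  have hbound := eLpNorm_le_of_norm_le_mul_add_mul_norm_mul (q := .ofReal (2 * p))
    (r := .ofReal (2 * p)) (ENNReal.one_le_ofReal.mpr hp) hg.1 hh.1 a b hf
  have := hgp.eLpNorm_ne_top
  have := hg.eLpNorm_ne_top
  have := hh.eLpNorm_ne_top
  refine (integral_norm_rpow_rpow_le_toReal_eLpNorm f hp0).trans <|
    (ENNReal.toReal_mono (by finiteness) hbound).trans_eq ?_
  rw [ENNReal.toReal_add (by finiteness) (by finiteness), ENNReal.toReal_mul, ENNReal.toReal_mul,
    ENNReal.toReal_mul, toReal_enorm, toReal_enorm, Real.norm_of_nonneg ha,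
    Real.norm_of_nonneg hb, hgp.toReal_eLpNorm_eq_integral_norm_rpow_rpow hp0,
    hg.toReal_eLpNorm_eq_integral_norm_rpow_rpow (by linarith),
    hh.toReal_eLpNorm_eq_integral_norm_rpow_rpow (by linarith), mul_assoc b]

end MeasureTheory

namespace ContinuousLinearMap

theorem opNorm_comp_comp_le {𝕜 E F G K : Type*} [NontriviallyNormedField 𝕜]
    [SeminormedAddCommGroup E] [SeminormedAddCommGroup F] [SeminormedAddCommGroup G]
    [SeminormedAddCommGroup K] [NormedSpace 𝕜 E] [NormedSpace 𝕜 F] [NormedSpace 𝕜 G]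
    [NormedSpace 𝕜 K] (A : G →L[𝕜] K) (B : F →L[𝕜] G) (C : E →L[𝕜] F) :
    ‖A ∘L B ∘L C‖ ≤ ‖A‖ * ‖B‖ * ‖C‖ :=
  (opNorm_comp_le _ _).trans <| by
    rw [mul_assoc]; gcongr; exact opNorm_comp_le _ _

variable {X : Type*} [NormedAddCommGroup X] [InnerProductSpace ℝ X]

theorem IsPositive.inner_mul_inner_le {T : X →L[ℝ] X} (hT : T.IsPositive) (x y : X) :
    ⟪T x, y⟫ * ⟪T y, x⟫ ≤ ⟪T x, x⟫ * ⟪T y, y⟫ :=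
  LinearMap.BilinForm.apply_mul_apply_le_of_forall_zero_le ((innerₗ X).comp T.toLinearMap)
    hT.inner_nonneg_left x y

theorem IsPositive.norm_apply_sq_le {T : X →L[ℝ] X} (hT : T.IsPositive) (x : X) :
    ‖T x‖ ^ 2 ≤ ‖T‖ * ⟪T x, x⟫ := by
  have hcs := hT.inner_mul_inner_le x (T x)
  rw [hT.inner_left_eq_inner_right (T x) x, real_inner_self_eq_norm_sq] at hcs
  have hTTx : ⟪T (T x), T x⟫ ≤ ‖T‖ * ‖T x‖ ^ 2 := calc
    ⟪T (T x), T x⟫ ≤ ‖T (T x)‖ * ‖T x‖ := real_inner_le_norm _ _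
    _ ≤ ‖T‖ * ‖T x‖ * ‖T x‖ := by gcongr; exact T.le_opNorm _
    _ = ‖T‖ * ‖T x‖ ^ 2 := by ring
  have hquad : ‖T x‖ ^ 2 * ‖T x‖ ^ 2 ≤ ‖T x‖ ^ 2 * (‖T‖ * ⟪T x, x⟫) := by
    nlinarith [hT.inner_nonneg_left x]
  rcases (sq_nonneg ‖T x‖).eq_or_lt with h0 | hpos
  · rw [← h0]; exact mul_nonneg (norm_nonneg _) (hT.inner_nonneg_left x)
  · exact le_of_mul_le_mul_left hquad hpos

theorem IsPositive.ring_inverse {T : X →L[ℝ] X} (hT : T.IsPositive) :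
    (Ring.inverse T).IsPositive := by
  by_cases hu : IsUnit T
  · have hcancel (y : X) : T (Ring.inverse T y) = y := by
      simpa using congr($(Ring.mul_inverse_cancel T hu) y)
    refine ⟨fun x y => ?_, fun x => ?_⟩
    · change ⟪Ring.inverse T x, y⟫ = ⟪x, Ring.inverse T y⟫
      conv_lhs => rw [← hcancel y, ← hT.inner_left_eq_inner_right, hcancel]
    · have := hT.inner_nonneg_left (Ring.inverse T x)
      rw [hcancel, real_inner_comm] at this
      simpa [reApplyInnerSelf] using this
  · rw [Ring.inverse_non_unit T hu]
    exact isPositive_zero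

theorem IsPositive.norm_sq_le_norm_ring_inverse_mul_inner {T : X →L[ℝ] X} (hT : T.IsPositive)
    (hu : IsUnit T) (x : X) : ‖x‖ ^ 2 ≤ ‖Ring.inverse T‖ * ⟪T x, x⟫ := by
  have hx : Ring.inverse T (T x) = x := by
    simpa using congr($(Ring.inverse_mul_cancel T hu) x)
  simpa [hx, real_inner_comm] using hT.ring_inverse.norm_apply_sq_le (T x)

theorem norm_ring_inverse_le_of_norm_sq_le {S : X →L[ℝ] X} (hu : IsUnit S) {c : ℝ} (hc : 0 ≤ c)
    (h : ∀ x, ‖x‖ ^ 2 ≤ c * ⟪S x, x⟫) : ‖Ring.inverse S‖ ≤ c := by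
  refine (Ring.inverse S).opNorm_le_bound hc fun u => ?_
  set x := Ring.inverse S u
  have hSx : S x = u := by simpa using congr($(Ring.mul_inverse_cancel S hu) u)
  have hquad : ‖x‖ * ‖x‖ ≤ ‖x‖ * (c * ‖u‖) := calc
    ‖x‖ * ‖x‖ = ‖x‖ ^ 2 := by ring
    _ ≤ c * ⟪u, x⟫ := hSx ▸ h x
    _ ≤ c * (‖u‖ * ‖x‖) := by gcongr; exact real_inner_le_norm u x
    _ = ‖x‖ * (c * ‖u‖) := by ring
  rcases (norm_nonneg x).eq_or_lt with h0 | hpos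
  · rw [← h0]; positivity
  · exact le_of_mul_le_mul_left hquad hpos

theorem norm_ring_inverse_add_le {K R : X →L[ℝ] X} (hK : K.IsPositive) (hR : R.IsPositive)
    (hRu : IsUnit R) (hKRu : IsUnit (K + R)) : ‖Ring.inverse (K + R)‖ ≤ ‖Ring.inverse R‖ := by
  refine norm_ring_inverse_le_of_norm_sq_le hKRu (norm_nonneg _) fun x => ?_
  calc ‖x‖ ^ 2 ≤ ‖Ring.inverse R‖ * ⟪R x, x⟫ := hR.norm_sq_le_norm_ring_inverse_mul_inner hRu x
    _ ≤ ‖Ring.inverse R‖ * ⟪(K + R) x, x⟫ := by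
      rw [add_apply, inner_add_left]
      gcongr
      exact le_add_of_nonneg_left (hK.inner_nonneg_left x)

theorem isUnit_of_coercive [CompleteSpace X] {T : X →L[ℝ] X} {α : ℝ} (hα : 0 < α)
    (h : ∀ x, α * ‖x‖ ^ 2 ≤ ⟪T x, x⟫) : IsUnit T :=
  isUnit_of_forall_le_norm_inner_map T (Real.toNNReal_pos.mpr hα) fun x => by
    rw [Real.coe_toNNReal _ hα.le, mul_comm, Real.norm_eq_abs]
    exact (h x).trans (le_abs_self _)

end ContinuousLinearMap

section AnalysisCov

variable (H : V →L[ℝ] W) (R : W →L[ℝ] W)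

noncomputable def innovationCov (Q : V →L[ℝ] V) : W →L[ℝ] W :=
  H ∘L Q ∘L adjoint H + R

theorem analysisCov_sub_analysisCov (P Q : V →L[ℝ] V) :
    analysisCov H R Q - analysisCov H R P =
      (Q - P) - ((Q - P) ∘L adjoint H ∘L Ring.inverse (innovationCov H R Q) ∘L H ∘L Q
        + P ∘L adjoint H ∘L (Ring.inverse (innovationCov H R Q)
            - Ring.inverse (innovationCov H R P)) ∘L H ∘L Q
        + P ∘L adjoint H ∘L Ring.inverse (innovationCov H R P) ∘L H ∘L (Q - P)) := by
  ext v
  simp only [analysisCov, innovationCov, sub_apply, add_apply, comp_apply, map_sub]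
  abel

theorem ring_inverse_innovationCov_sub {P Q : V →L[ℝ] V} (hP : IsUnit (innovationCov H R P))
    (hQ : IsUnit (innovationCov H R Q)) :
    Ring.inverse (innovationCov H R Q) - Ring.inverse (innovationCov H R P) =
      Ring.inverse (innovationCov H R Q) ∘L (H ∘L (P - Q) ∘L adjoint H)
        ∘L Ring.inverse (innovationCov H R P) := by
  have hSPQ : innovationCov H R P - innovationCov H R Q = H ∘L (P - Q) ∘L adjoint H := by
    simp only [innovationCov, comp_sub, sub_comp]
    abel
  rw [Ring.inverse_sub_inverse (iff_of_true hQ hP), hSPQ]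
  rfl

theorem norm_comp_adjoint_comp_comp_le (M N : V →L[ℝ] V) (S : W →L[ℝ] W) :
    ‖M ∘L adjoint H ∘L S ∘L H ∘L N‖ ≤ ‖M‖ * (‖H‖ ^ 2 * ‖S‖) * ‖N‖ := calc
  _ ≤ ‖M‖ * ‖adjoint H‖ * ‖S ∘L H ∘L N‖ := opNorm_comp_comp_le _ _ _
  _ ≤ ‖M‖ * ‖H‖ * (‖S‖ * ‖H‖ * ‖N‖) := by
    rw [LinearIsometryEquiv.norm_map]; gcongr; exact opNorm_comp_comp_le _ _ _
  _ = ‖M‖ * (‖H‖ ^ 2 * ‖S‖) * ‖N‖ := by ring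

theorem norm_analysisCov_sub_le_of_norm_ring_inverse_le {P Q : V →L[ℝ] V}
    (hP : IsUnit (innovationCov H R P)) (hQ : IsUnit (innovationCov H R Q)) {r : ℝ}
    (hrP : ‖Ring.inverse (innovationCov H R P)‖ ≤ r)
    (hrQ : ‖Ring.inverse (innovationCov H R Q)‖ ≤ r) :
    ‖analysisCov H R Q - analysisCov H R P‖
      ≤ (1 + ‖H‖ ^ 2 * r * ‖P‖) * ‖Q - P‖
        + (‖H‖ ^ 2 * r + (‖H‖ ^ 2 * r) ^ 2 * ‖P‖) * ‖Q‖ * ‖Q - P‖ := by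
  have hr : 0 ≤ r := (norm_nonneg _).trans hrP
  have hdiff : ‖Ring.inverse (innovationCov H R Q) - Ring.inverse (innovationCov H R P)‖
      ≤ ‖H‖ ^ 2 * r * ‖Q - P‖ * r := by
    rw [ring_inverse_innovationCov_sub H R hP hQ]
    refine (opNorm_comp_comp_le _ _ _).trans ?_
    have hHPQ := opNorm_comp_comp_le H (P - Q) (adjoint H)
    rw [LinearIsometryEquiv.norm_map, norm_sub_rev] at hHPQ
    calc _ ≤ r * (‖H‖ * ‖Q - P‖ * ‖H‖) * r := by gcongr
      _ = _ := by ring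
  rw [analysisCov_sub_analysisCov]
  calc _ ≤ ‖Q - P‖ + (‖(Q - P) ∘L adjoint H ∘L Ring.inverse (innovationCov H R Q) ∘L H ∘L Q‖
        + ‖P ∘L adjoint H ∘L (Ring.inverse (innovationCov H R Q)
            - Ring.inverse (innovationCov H R P)) ∘L H ∘L Q‖
        + ‖P ∘L adjoint H ∘L Ring.inverse (innovationCov H R P) ∘L H ∘L (Q - P)‖) :=
        (norm_sub_le _ _).trans (by gcongr; exact norm_add₃_le)
    _ ≤ ‖Q - P‖ + (‖Q - P‖ * (‖H‖ ^ 2 * r) * ‖Q‖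
        + ‖P‖ * (‖H‖ ^ 2 * (‖H‖ ^ 2 * r * ‖Q - P‖ * r)) * ‖Q‖
        + ‖P‖ * (‖H‖ ^ 2 * r) * ‖Q - P‖) := by
      gcongr <;> refine (norm_comp_adjoint_comp_comp_le H _ _ _).trans ?_ <;> gcongr
    _ = _ := by ring

theorem inner_innovationCov_apply_self_ge {Q : V →L[ℝ] V} (hQ : Q.IsPositive) {α : ℝ}
    (hR : ∀ u, α * ‖u‖ ^ 2 ≤ ⟪R u, u⟫) (u : W) :
    α * ‖u‖ ^ 2 ≤ ⟪innovationCov H R Q u, u⟫ := by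
  rw [innovationCov, add_apply, inner_add_left]
  linarith [hR u, (hQ.conj_adjoint H).inner_nonneg_left u]

theorem norm_analysisCov_sub_le {P Q : V →L[ℝ] V} (hP : P.IsPositive) (hQ : Q.IsPositive)
    (hRsym : IsSelfAdjoint R) {α : ℝ} (hα : 0 < α) (hR : ∀ u, α * ‖u‖ ^ 2 ≤ ⟪R u, u⟫) :
    ‖analysisCov H R Q - analysisCov H R P‖
      ≤ (1 + ‖H‖ ^ 2 * ‖Ring.inverse R‖ * ‖P‖) * ‖Q - P‖
        + (‖H‖ ^ 2 * ‖Ring.inverse R‖ + (‖H‖ ^ 2 * ‖Ring.inverse R‖) ^ 2 * ‖P‖)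
          * ‖Q‖ * ‖Q - P‖ := by
  have hRpos : R.IsPositive := isPositive_def'.mpr
    ⟨hRsym, fun u => (mul_nonneg hα.le (sq_nonneg _)).trans (hR u)⟩
  have hRu : IsUnit R := isUnit_of_coercive hα hR
  have hSu {M : V →L[ℝ] V} (hM : M.IsPositive) : IsUnit (innovationCov H R M) :=
    isUnit_of_coercive hα (inner_innovationCov_apply_self_ge H R hM hR)
  exact norm_analysisCov_sub_le_of_norm_ring_inverse_le H R (hSu hP) (hSu hQ)
    (norm_ring_inverse_add_le (hP.conj_adjoint H) hRpos hRu (hSu hP))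
    (norm_ring_inverse_add_le (hQ.conj_adjoint H) hRpos hRu (hSu hQ))

end AnalysisCov

/-- `Lᵖ` continuity of the analysis covariance map with a random argument: if `Q` is a
random operator with `Q ≥ 0` a.s., `P ≥ 0` constant, `R > 0`, and `c = |H|²|R⁻¹|`, then
`‖A(Q) − A(P)‖_p ≤ (1 + c|P|)‖Q−P‖_p + (c + c²|P|)‖Q‖_{2p}‖Q−P‖_{2p}`. -/
theorem lp_analysisCov_continuity
    {Ωs : Type*} [MeasurableSpace Ωs] (μ : Measure Ωs) [IsProbabilityMeasure μ]
    (H : V →L[ℝ] W) (R : W →L[ℝ] W) (P : V →L[ℝ] V) (Q : Ωs → V →L[ℝ] V)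
    (hP : P.IsPositive) (hQpos : ∀ᵐ ω ∂μ, (Q ω).IsPositive)
    (hRsym : IsSelfAdjoint R)
    (hRpos : ∃ α : ℝ, 0 < α ∧ ∀ u : W, α * ‖u‖ ^ 2 ≤ ⟪R u, u⟫)
    (p : ℝ) (hp : 1 ≤ p)
    (hQmom : MemLp Q (ENNReal.ofReal (2 * p)) μ) :
    (∫ ω, ‖analysisCov H R (Q ω) - analysisCov H R P‖ ^ p ∂μ) ^ (1 / p)
      ≤ (1 + (‖H‖ ^ 2 * ‖(Ring.inverse R : W →L[ℝ] W)‖) * ‖P‖) *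
          (∫ ω, ‖Q ω - P‖ ^ p ∂μ) ^ (1 / p)
        + ((‖H‖ ^ 2 * ‖(Ring.inverse R : W →L[ℝ] W)‖)
            + (‖H‖ ^ 2 * ‖(Ring.inverse R : W →L[ℝ] W)‖) ^ 2 * ‖P‖) *
          (∫ ω, ‖Q ω‖ ^ (2 * p) ∂μ) ^ (1 / (2 * p)) *
          (∫ ω, ‖Q ω - P‖ ^ (2 * p) ∂μ) ^ (1 / (2 * p)) := by
  obtain ⟨α, hα, hR⟩ := hRpos
  have hpointwise : ∀ᵐ ω ∂μ, ‖analysisCov H R (Q ω) - analysisCov H R P‖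
      ≤ (1 + ‖H‖ ^ 2 * ‖Ring.inverse R‖ * ‖P‖) * ‖Q ω - P‖
        + (‖H‖ ^ 2 * ‖Ring.inverse R‖ + (‖H‖ ^ 2 * ‖Ring.inverse R‖) ^ 2 * ‖P‖)
          * (‖Q ω‖ * ‖Q ω - P‖) := by
    filter_upwards [hQpos] with ω hQ
    simpa only [mul_assoc] using norm_analysisCov_sub_le H R hP hQ hRsym hα hR
  exact integral_norm_rpow_rpow_le_of_norm_le_mul_add_mul_norm_mul hp
    (hQmom.sub (memLp_const P)) hQmom (by positivity) (by positivity) hpointwise
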